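/- For a hypergraph H=(V,E) and subsets F ⊆ U ⊆ V, the prime p_F is an associated prime of R/J(H)^s if and only if p_F is an associated prime of K[U]/J(H_U)^s, where H_U is the induced subhypergraph of H on U. -/

import Mathlib

open MvPolynomial

noncomputable section

/-- A finite simple hypergraph on a vertex set `V`: edges are nonempty subsets of `V`
forming an antichain (a clutter). -/
structure FinHypergraph (σ : Type*) where
  V : Finset σ
  E : Finset (Finset σ)
  edge_sub : ∀ e ∈ E, e ⊆ V
  edge_nonempty : ∀ e ∈ E, e.Nonempty
  simple : ∀ e ∈ E, ∀ f ∈ E, e ⊆ f → e = f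

/-- The prime ideal generated by the variables indexed by `e`. -/
def primeOf {σ : Type*} (K : Type*) [Field K] (e : Finset σ) : Ideal (MvPolynomial σ K) :=
  Ideal.span ((fun i => (X i : MvPolynomial σ K)) '' e)

/-- The cover ideal of a set of edges: the intersection of the edge primes. -/
def coverIdeal {σ : Type*} (K : Type*) [Field K] (E : Finset (Finset σ)) :
    Ideal (MvPolynomial σ K) :=
  ⨅ e ∈ E, primeOf K e

/-- The squarefree monomial supported on `T`. -/
def xU {σ : Type*} (K : Type*) [Field K] (T : Finset σ) : MvPolynomial σ K :=
  ∏ i ∈ T, X i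
/-- `T` is a vertex cover of the edge set `E`. -/
def IsCover {σ : Type*} (E : Finset (Finset σ)) (T : Finset σ) : Prop :=
  ∀ e ∈ E, ∃ v ∈ e, v ∈ T

/-- `T` is a minimal vertex cover of the edge set `E`. -/
def IsMinimalCover {σ : Type*} (E : Finset (Finset σ)) (T : Finset σ) : Prop :=
  IsCover E T ∧ ∀ T' ⊂ T, ¬ IsCover E T'

/-- `m` is a minimal monomial generator of the monomial ideal `I`: it lies in `I`, and
every divisor of `m` lying in `I` is associated to `m`. -/
def IsMinMonGen {σ K : Type*} [Field K] (I : Ideal (MvPolynomial σ K))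
    (m : MvPolynomial σ K) : Prop :=
  m ∈ I ∧ ∀ d : MvPolynomial σ K, d ∣ m → d ∈ I → Associated d m

/-- `(V', E')` is a shadow of the hypergraph `H`. -/
def IsShadow {σ : Type*} [DecidableEq σ] (H : FinHypergraph σ) (V' : Finset σ) (E' : Finset (Finset σ)) : Prop :=
  V' ⊆ H.V ∧ (∀ e ∈ E', e ⊆ V') ∧ (∀ e ∈ E', e.Nonempty) ∧
    (∀ e ∈ E', ∀ f ∈ E', e ⊆ f → e = f) ∧
    E'.card = H.E.card ∧ ∀ e ∈ H.E, e ∩ V' ∈ E'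

/-- The cover ideal of a hypergraph on vertex set `V'` (edges `E'`, subsets of `V'`),
as an ideal of the small polynomial ring `K[V']`. -/
def smallCover {σ : Type*} [DecidableEq σ] (K : Type*) [Field K] (V' : Finset σ)
    (E' : Finset (Finset σ)) : Ideal (MvPolynomial {x : σ // x ∈ V'} K) :=
  ⨅ e ∈ E', primeOf K (e.subtype (· ∈ V'))

/-- `(V', E')` is an odd cycle graph `C_{2n+1}` for some positive `n`. -/
def IsOddCycle {σ : Type*} [DecidableEq σ] (V' : Finset σ) (E' : Finset (Finset σ)) : Prop :=
  ∃ n : ℕ, 0 < n ∧ ∃ f : Fin (2 * n + 1) → σ, Function.Injective f ∧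
    V' = Finset.univ.image f ∧ E' = Finset.univ.image (fun i => ({f i, f (i + 1)} : Finset σ))

/-- `IsAssociatedPrime` with its meaning in the older Mathlib: `I` is prime and is the
annihilator of some `x : M`. -/
def IsAssociatedPrimeOld {R : Type*} [CommRing R] (I : Ideal R) (M : Type*) [AddCommGroup M]
    [Module R M] : Prop :=
  I.IsPrime ∧ ∃ x : M, I = (Submodule.span R {x}).annihilator

/-!
Both `J(H)^s` and `J(H_U)^s` are monomial ideals, so if `p_F` is the annihilator of some class
modulo either of them, it is the annihilator of the class of a monomial (prime avoidance over the
monomials of a witness). Setting the variables outside `U` equal to `1` maps `J(H)` into `J(H_U)`,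
and `x_{V∖U} · J(H_U) ⊆ J(H)` because every edge not contained in `U` meets `V ∖ U`. As `p_F`
involves no variable outside `U`, these two maps carry a monomial witness `x^t` over `R` to the
witness `x^{t|_U}` over `K[U]`, and a monomial witness `x^t` over `K[U]` to `x^t · x_{V∖U}^s`.
-/

namespace MvPolynomial

section MonomialIdeal

variable {σ R : Type*} [CommSemiring R]

/-- Equivalently (`IsMonomialIdeal.eq_span`), `I` is spanned by monomials. -/
def IsMonomialIdeal (I : Ideal (MvPolynomial σ R)) : Prop :=
  ∀ f ∈ I, ∀ u ∈ f.support, monomial u 1 ∈ I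

lemma mem_of_forall_monomial_mem {I : Ideal (MvPolynomial σ R)} {f : MvPolynomial σ R}
    (h : ∀ u ∈ f.support, monomial u 1 ∈ I) : f ∈ I := by
  rw [f.as_sum]
  refine Ideal.sum_mem _ fun u hu => ?_
  rw [← mul_one (coeff u f), ← C_mul_monomial]
  exact I.mul_mem_left _ (h u hu)

namespace IsMonomialIdeal

variable {I J : Ideal (MvPolynomial σ R)}

lemma le_iff (hI : IsMonomialIdeal I) :
    I ≤ J ↔ ∀ u, monomial u (1 : R) ∈ I → monomial u 1 ∈ J :=
  ⟨fun h _ hu => h hu, fun h _ hf => mem_of_forall_monomial_mem fun u hu => h u (hI _ hf u hu)⟩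

lemma eq_span (hI : IsMonomialIdeal I) :
    I = Ideal.span ((fun u => monomial u (1 : R)) '' {u | monomial u 1 ∈ I}) := by
  refine le_antisymm (fun f hf => mem_ideal_span_monomial_image.mpr fun u hu => ?_) ?_
  · exact ⟨u, hI f hf u hu, le_rfl⟩
  · rw [Ideal.span_le]
    rintro _ ⟨u, hu, rfl⟩
    exact hu

end IsMonomialIdeal

lemma isMonomialIdeal_span {S : Set (MvPolynomial σ R)} (hS : ∀ p ∈ S, ∃ u, p = monomial u 1) :
    IsMonomialIdeal (Ideal.span S) := by
  have hS' : S = (fun u => monomial u (1 : R)) '' {u | monomial u 1 ∈ S} := by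
    ext p
    constructor
    · intro hp
      obtain ⟨u, rfl⟩ := hS p hp
      exact ⟨u, hp, rfl⟩
    · rintro ⟨u, hu, rfl⟩
      exact hu
  intro f hf u hu
  rw [hS'] at hf ⊢
  obtain ⟨a, ha, hau⟩ := mem_ideal_span_monomial_image.mp hf u hu
  have hsplit : monomial u (1 : R) = monomial (u - a) 1 * monomial a 1 := by
    rw [monomial_mul, mul_one, tsub_add_cancel_of_le hau]
  rw [hsplit]
  exact Ideal.mul_mem_left _ _ (Ideal.subset_span ⟨a, ha, rfl⟩)

lemma isMonomialIdeal_span_X_image (s : Set σ) :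
    IsMonomialIdeal (Ideal.span (X '' s : Set (MvPolynomial σ R))) :=
  isMonomialIdeal_span <| by
    rintro _ ⟨i, -, rfl⟩
    exact ⟨_, rfl⟩

lemma isMonomialIdeal_top : IsMonomialIdeal (⊤ : Ideal (MvPolynomial σ R)) :=
  fun _ _ _ _ => Submodule.mem_top

lemma isMonomialIdeal_iInf {ι : Sort*} {I : ι → Ideal (MvPolynomial σ R)}
    (hI : ∀ i, IsMonomialIdeal (I i)) : IsMonomialIdeal (⨅ i, I i) := by
  intro f hf u hu
  rw [Ideal.mem_iInf] at hf ⊢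
  exact fun i => hI i f (hf i) u hu

namespace IsMonomialIdeal

variable {I J : Ideal (MvPolynomial σ R)}

lemma mul (hI : IsMonomialIdeal I) (hJ : IsMonomialIdeal J) : IsMonomialIdeal (I * J) := by
  rw [hI.eq_span, hJ.eq_span, Ideal.span_mul_span']
  refine isMonomialIdeal_span ?_
  rintro _ ⟨_, ⟨a, -, rfl⟩, _, ⟨b, -, rfl⟩, rfl⟩
  exact ⟨a + b, by simp only [monomial_mul, mul_one]⟩

lemma pow (hI : IsMonomialIdeal I) (n : ℕ) : IsMonomialIdeal (I ^ n) := by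
  induction n with
  | zero => simpa using isMonomialIdeal_top
  | succ n ih => exact ih.mul hI

lemma monomial_add_mem_of_mul_monomial_mem (hI : IsMonomialIdeal I) {f : MvPolynomial σ R}
    {w u : σ →₀ ℕ} (h : f * monomial w 1 ∈ I) (hu : u ∈ f.support) : monomial (u + w) 1 ∈ I :=
  hI _ h _ <| by rwa [mem_support_iff, coeff_mul_monomial, mul_one, ← mem_support_iff]

lemma colon_monomial (hI : IsMonomialIdeal I) (w : σ →₀ ℕ) :
    IsMonomialIdeal (I.colon {monomial w (1 : R)}) := by
  intro f hf u hu
  rw [Submodule.mem_colon_singleton, smul_eq_mul] at hf ⊢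
  rw [monomial_mul, mul_one]
  exact hI.monomial_add_mem_of_mul_monomial_mem hf hu

/-- By prime avoidance, some monomial of the witness `f` is again a witness. -/
lemma exists_monomial_colon_eq (hI : IsMonomialIdeal I) {P : Ideal (MvPolynomial σ R)}
    (hP : IsMonomialIdeal P) [P.IsPrime] {f : MvPolynomial σ R} (hf : I.colon {f} = P) :
    ∃ u, I.colon {monomial u (1 : R)} = P := by
  have hP_le : ∀ u ∈ f.support, P ≤ I.colon {monomial u 1} := by
    intro u hu
    refine hP.le_iff.mpr fun v hv => ?_
    rw [← hf, Submodule.mem_colon_singleton, smul_eq_mul, mul_comm] at hv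
    rw [Submodule.mem_colon_singleton, smul_eq_mul, monomial_mul, mul_one, add_comm]
    exact hI.monomial_add_mem_of_mul_monomial_mem hv hu
  have hinf_le : f.support.inf (fun u => I.colon {monomial u 1}) ≤ P := by
    intro g hg
    have hf_mem : f ∈ I.colon {g} := by
      refine Ideal.span_le.mpr ?_ (mem_ideal_span_monomial_image.mpr fun u hu => ⟨u, hu, le_rfl⟩)
      rintro _ ⟨u, hu, rfl⟩
      rw [SetLike.mem_coe, Submodule.mem_colon_singleton, smul_eq_mul, mul_comm]
      exact Submodule.mem_colon_singleton.mp (Submodule.mem_finsetInf.mp hg u hu)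
    rw [← hf, Submodule.mem_colon_singleton, smul_eq_mul, mul_comm]
    exact Submodule.mem_colon_singleton.mp hf_mem
  obtain ⟨u, hu, hle⟩ := (Ideal.IsPrime.inf_le' ‹_›).mp hinf_le
  exact ⟨u, le_antisymm hle (hP_le u hu)⟩

end IsMonomialIdeal

end MonomialIdeal

variable {σ R : Type*}

lemma isPrime_span_X_image [CommRing R] [IsDomain R] (s : Set σ) :
    (Ideal.span (X '' s : Set (MvPolynomial σ R))).IsPrime := by
  classical
  set P := Ideal.span (X '' s : Set (MvPolynomial σ R))
  let φ : MvPolynomial σ R →ₐ[R] MvPolynomial σ R := aeval fun i => if i ∈ s then 0 else X i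
  have hφ : (Ideal.Quotient.mkₐ R P).comp φ = Ideal.Quotient.mkₐ R P := by
    refine algHom_ext fun i => ?_
    by_cases hi : i ∈ s
    · have hX : X i ∈ P := Ideal.subset_span ⟨i, hi, rfl⟩
      simp [φ, hi, ((Ideal.Quotient.eq_zero_iff_mem).mpr hX).symm]
    · simp [φ, hi]
  have hker : RingHom.ker φ = P := by
    refine le_antisymm (fun f hf => ?_) ?_
    · rw [← Ideal.Quotient.eq_zero_iff_mem, ← Ideal.Quotient.mkₐ_eq_mk R, ← hφ,
        AlgHom.comp_apply, (RingHom.mem_ker).mp hf, map_zero]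
    · rw [Ideal.span_le]
      rintro _ ⟨i, hi, rfl⟩
      simp [φ, hi]
  rw [← hker]
  exact RingHom.ker_isPrime _

section evalOneOutside

variable [CommSemiring R] [DecidableEq σ] (U : Finset σ)

def evalOneOutside : MvPolynomial σ R →ₐ[R] MvPolynomial U R :=
  aeval fun v => if h : v ∈ U then X ⟨v, h⟩ else 1

variable {U}

@[simp]
lemma evalOneOutside_X_of_mem {v : σ} (h : v ∈ U) :
    evalOneOutside U (X v : MvPolynomial σ R) = X ⟨v, h⟩ := by
  simp [evalOneOutside, h]

@[simp]
lemma evalOneOutside_X_of_notMem {v : σ} (h : v ∉ U) :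
    evalOneOutside U (X v : MvPolynomial σ R) = 1 := by
  simp [evalOneOutside, h]

@[simp]
lemma evalOneOutside_rename (g : MvPolynomial U R) :
    evalOneOutside U (rename Subtype.val g) = g := by
  have : (evalOneOutside U).comp (rename Subtype.val) = AlgHom.id R (MvPolynomial U R) :=
    algHom_ext fun i => by simp
  exact DFunLike.congr_fun this g

lemma evalOneOutside_prod_X {T : Finset σ} (hT : Disjoint T U) :
    evalOneOutside U (∏ v ∈ T, X v : MvPolynomial σ R) = 1 := by
  rw [map_prod]
  exact Finset.prod_eq_one fun v hv => evalOneOutside_X_of_notMem (Finset.disjoint_left.mp hT hv)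

lemma rename_evalOneOutside_monomial_dvd (t : σ →₀ ℕ) :
    rename Subtype.val (evalOneOutside U (monomial t (1 : R))) ∣ monomial t 1 := by
  rw [← prod_X_pow_eq_monomial, map_prod, map_prod]
  refine Finset.prod_dvd_prod_of_dvd _ _ fun v _ => ?_
  by_cases h : v ∈ U <;> simp [h]

end evalOneOutside

end MvPolynomial

open MvPolynomial

lemma isAssociatedPrimeOld_quotient_iff {R : Type*} [CommRing R] {I P : Ideal R} :
    IsAssociatedPrimeOld P (R ⧸ I) ↔ P.IsPrime ∧ ∃ f, I.colon {f} = P := by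
  have hann : ∀ f : R, (Submodule.span R {Ideal.Quotient.mk I f}).annihilator = I.colon {f} := by
    intro f
    ext r
    rw [Submodule.mem_annihilator_span_singleton, Submodule.mem_colon_singleton, smul_eq_mul,
      Algebra.smul_def, Ideal.Quotient.algebraMap_eq, ← map_mul, Ideal.Quotient.eq_zero_iff_mem]
  refine and_congr_right fun _ => ⟨?_, ?_⟩
  · rintro ⟨x, hx⟩
    obtain ⟨f, rfl⟩ := Ideal.Quotient.mk_surjective x
    exact ⟨f, (hann f).symm.trans hx.symm⟩
  · rintro ⟨f, hf⟩
    exact ⟨_, ((hann f).trans hf).symm⟩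

lemma Ideal.pow_mul_span_singleton_pow_le {R : Type*} [CommSemiring R] {I J : Ideal R} {m : R}
    (h : J * Ideal.span {m} ≤ I) (n : ℕ) : J ^ n * Ideal.span {m ^ n} ≤ I ^ n := by
  rw [← Ideal.span_singleton_pow, ← mul_pow]
  exact Ideal.pow_right_mono h n

section Hypergraph

variable {σ K : Type*} [Field K]

instance isPrime_primeOf (F : Finset σ) : (primeOf K F).IsPrime :=
  isPrime_span_X_image _

lemma isMonomialIdeal_primeOf (F : Finset σ) : IsMonomialIdeal (primeOf K F) :=
  isMonomialIdeal_span_X_image _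

lemma isMonomialIdeal_coverIdeal (E : Finset (Finset σ)) : IsMonomialIdeal (coverIdeal K E) :=
  isMonomialIdeal_iInf fun e => isMonomialIdeal_iInf fun _ => isMonomialIdeal_primeOf e

variable [DecidableEq σ]

lemma isMonomialIdeal_smallCover (U : Finset σ) (E : Finset (Finset σ)) :
    IsMonomialIdeal (smallCover K U E) :=
  isMonomialIdeal_iInf fun _ => isMonomialIdeal_iInf fun _ => isMonomialIdeal_primeOf _

lemma map_rename_primeOf_subtype_le (F U : Finset σ) :
    (primeOf K (F.subtype (· ∈ U))).map (rename Subtype.val) ≤ primeOf K F := by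
  rw [primeOf, Ideal.map_span, Ideal.span_le]
  rintro _ ⟨_, ⟨a, ha, rfl⟩, rfl⟩
  exact Ideal.subset_span ⟨a, Finset.mem_subtype.mp ha, by simp⟩

lemma map_evalOneOutside_primeOf_le {F U : Finset σ} (hFU : F ⊆ U) :
    (primeOf K F).map (evalOneOutside U) ≤ primeOf K (F.subtype (· ∈ U)) := by
  rw [primeOf, Ideal.map_span, Ideal.span_le]
  rintro _ ⟨_, ⟨a, ha, rfl⟩, rfl⟩
  exact Ideal.subset_span ⟨⟨a, hFU ha⟩, Finset.mem_subtype.mpr ha, by simp [hFU ha]⟩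

lemma xU_pow_notMem_primeOf {F U : Finset σ} (hFU : F ⊆ U) (V : Finset σ) (s : ℕ) :
    xU K (V \ U) ^ s ∉ primeOf K F := by
  intro h
  have h1 := map_evalOneOutside_primeOf_le hFU (Ideal.mem_map_of_mem _ h)
  rw [map_pow, xU, evalOneOutside_prod_X Finset.sdiff_disjoint, one_pow] at h1
  exact (isPrime_primeOf _).ne_top ((Ideal.eq_top_iff_one _).mpr h1)

lemma map_evalOneOutside_coverIdeal_le (U : Finset σ) (E : Finset (Finset σ)) :
    (coverIdeal K E).map (evalOneOutside U) ≤ smallCover K U (E.filter (· ⊆ U)) := by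
  refine le_iInf₂ fun e he => ?_
  rw [Finset.mem_filter] at he
  exact (Ideal.map_mono (iInf₂_le e he.1)).trans (map_evalOneOutside_primeOf_le he.2)

/-- An edge not contained in `U` meets `V \ U`, so its prime contains `xU K (V \ U)`. -/
lemma map_rename_smallCover_mul_le {V U : Finset σ} {E : Finset (Finset σ)}
    (hE : ∀ e ∈ E, e ⊆ V) :
    (smallCover K U (E.filter (· ⊆ U))).map (rename Subtype.val) * Ideal.span {xU K (V \ U)} ≤
      coverIdeal K E := by
  refine le_iInf₂ fun e he => ?_
  by_cases heU : e ⊆ U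
  · have hle : smallCover K U (E.filter (· ⊆ U)) ≤ primeOf K (e.subtype (· ∈ U)) :=
      iInf₂_le e (Finset.mem_filter.mpr ⟨he, heU⟩)
    exact Ideal.mul_le_left.trans ((Ideal.map_mono hle).trans (map_rename_primeOf_subtype_le e U))
  · obtain ⟨v, hve, hvU⟩ := Finset.not_subset.mp heU
    refine Ideal.mul_le_right.trans ((Ideal.span_singleton_le_iff_mem _).mpr ?_)
    exact Ideal.mem_of_dvd _ (Finset.dvd_prod_of_mem _ (Finset.mem_sdiff.mpr ⟨hE e he hve, hvU⟩))
      (Ideal.subset_span ⟨v, hve, rfl⟩)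

variable {V U F : Finset σ} {E : Finset (Finset σ)} {s : ℕ}

lemma evalOneOutside_mem_smallCover_pow {g : MvPolynomial σ K} (hg : g ∈ coverIdeal K E ^ s) :
    evalOneOutside U g ∈ smallCover K U (E.filter (· ⊆ U)) ^ s := by
  refine Ideal.pow_right_mono (map_evalOneOutside_coverIdeal_le U E) s ?_
  rw [← Ideal.map_pow]
  exact Ideal.mem_map_of_mem _ hg

lemma rename_mul_xU_pow_mem_coverIdeal_pow (hE : ∀ e ∈ E, e ⊆ V) {g : MvPolynomial U K}
    (hg : g ∈ smallCover K U (E.filter (· ⊆ U)) ^ s) :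
    rename Subtype.val g * xU K (V \ U) ^ s ∈ coverIdeal K E ^ s := by
  refine Ideal.pow_mul_span_singleton_pow_le (map_rename_smallCover_mul_le hE) s
    (Ideal.mul_mem_mul ?_ (Ideal.mem_span_singleton_self _))
  rw [← Ideal.map_pow]
  exact Ideal.mem_map_of_mem _ hg

lemma smallCover_pow_colon_evalOneOutside_eq (hFU : F ⊆ U) (hE : ∀ e ∈ E, e ⊆ V)
    {t : σ →₀ ℕ} (ht : (coverIdeal K E ^ s).colon {monomial t 1} = primeOf K F) :
    (smallCover K U (E.filter (· ⊆ U)) ^ s).colon {evalOneOutside U (monomial t 1)} =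
      primeOf K (F.subtype (· ∈ U)) := by
  ext g
  rw [Submodule.mem_colon_singleton, smul_eq_mul]
  constructor
  · intro hg
    obtain ⟨c, hc⟩ := rename_evalOneOutside_monomial_dvd (R := K) (U := U) t
    have hmem : rename Subtype.val g * xU K (V \ U) ^ s ∈ primeOf K F := by
      rw [← ht, Submodule.mem_colon_singleton, smul_eq_mul, hc]
      have := Ideal.mul_mem_right c _ (rename_mul_xU_pow_mem_coverIdeal_pow hE hg)
      rw [map_mul] at this
      convert this using 1
      ring
    have hg' := (Ideal.IsPrime.mem_or_mem inferInstance hmem).resolve_right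
      (xU_pow_notMem_primeOf hFU V s)
    simpa using map_evalOneOutside_primeOf_le hFU (Ideal.mem_map_of_mem _ hg')
  · intro hg
    have hmem : rename Subtype.val g * monomial t 1 ∈ coverIdeal K E ^ s := by
      rw [← smul_eq_mul, ← Submodule.mem_colon_singleton, ht]
      exact map_rename_primeOf_subtype_le F U (Ideal.mem_map_of_mem _ hg)
    simpa using evalOneOutside_mem_smallCover_pow (U := U) hmem

lemma coverIdeal_pow_colon_rename_mul_eq (hFU : F ⊆ U) (hE : ∀ e ∈ E, e ⊆ V) {t : U →₀ ℕ}
    (ht : (smallCover K U (E.filter (· ⊆ U)) ^ s).colon {monomial t 1} =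
      primeOf K (F.subtype (· ∈ U))) :
    (coverIdeal K E ^ s).colon {rename Subtype.val (monomial t 1) * xU K (V \ U) ^ s} =
      primeOf K F := by
  obtain ⟨w, hw⟩ : ∃ w, rename Subtype.val (monomial t (1 : K)) * xU K (V \ U) ^ s =
      monomial w 1 := by
    refine ⟨t.mapDomain Subtype.val + s • ∑ v ∈ V \ U, Finsupp.single v 1, ?_⟩
    simp only [rename_monomial, xU, X, ← monomial_sum_one, monomial_pow, one_pow, monomial_mul,
      mul_one]
  apply le_antisymm
  · rw [hw]
    refine (((isMonomialIdeal_coverIdeal E).pow s).colon_monomial w).le_iff.mpr fun u hu => ?_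
    rw [← hw, Submodule.mem_colon_singleton, smul_eq_mul] at hu
    have h1 := evalOneOutside_mem_smallCover_pow (U := U) hu
    rw [map_mul, map_mul, map_pow, evalOneOutside_rename, xU,
      evalOneOutside_prod_X Finset.sdiff_disjoint, one_pow, mul_one, ← smul_eq_mul,
      ← Submodule.mem_colon_singleton, ht] at h1
    exact Ideal.mem_of_dvd _ (rename_evalOneOutside_monomial_dvd u)
      (map_rename_primeOf_subtype_le F U (Ideal.mem_map_of_mem _ h1))
  · rw [primeOf, Ideal.span_le]
    rintro _ ⟨a, ha, rfl⟩
    rw [SetLike.mem_coe, Submodule.mem_colon_singleton, smul_eq_mul, ← mul_assoc]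
    have hXa : X ⟨a, hFU ha⟩ * monomial t 1 ∈ smallCover K U (E.filter (· ⊆ U)) ^ s := by
      rw [← smul_eq_mul, ← Submodule.mem_colon_singleton, ht]
      exact Ideal.subset_span ⟨_, Finset.mem_subtype.mpr ha, rfl⟩
    simpa using rename_mul_xU_pow_mem_coverIdeal_pow hE hXa

end Hypergraph

theorem isAssociatedPrime_iff_isAssociatedPrime_induced {σ K : Type*} [DecidableEq σ] [Field K]
    (H : FinHypergraph σ) (U F : Finset σ) (hFU : F ⊆ U) (s : ℕ) :
    IsAssociatedPrimeOld (primeOf K F) (MvPolynomial σ K ⧸ (coverIdeal K H.E) ^ s) ↔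
      IsAssociatedPrimeOld (primeOf K (F.subtype (· ∈ U)))
        (MvPolynomial {x : σ // x ∈ U} K ⧸
          (smallCover K U (H.E.filter (fun e => e ⊆ U))) ^ s) := by
  simp only [isAssociatedPrimeOld_quotient_iff, isPrime_primeOf, true_and]
  constructor
  · rintro ⟨f, hf⟩
    obtain ⟨t, ht⟩ :=
      ((isMonomialIdeal_coverIdeal _).pow s).exists_monomial_colon_eq (isMonomialIdeal_primeOf F) hf
    exact ⟨_, smallCover_pow_colon_evalOneOutside_eq hFU H.edge_sub ht⟩
  · rintro ⟨f, hf⟩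
    obtain ⟨t, ht⟩ := ((isMonomialIdeal_smallCover _ _).pow s).exists_monomial_colon_eq
      (isMonomialIdeal_primeOf _) hf
    exact ⟨_, coverIdeal_pow_colon_rename_mul_eq hFU H.edge_sub ht⟩
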